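/- For all real numbers β ≥ γ ≥ 0, the equation sinh²(2s) + sinh²(s) = sinh²(β) + sinh²(γ) has a unique solution s in the interval [0,∞); moreover, this solution satisfies s ≥ β/4. -/

import Mathlib

/-!
The left-hand side `F s = sinh² (2s) + sinh² s` is continuous and strictly increasing on
`[0, ∞)` with `F 0 = 0`, so `F` hits the right-hand side `c` exactly once there. Existence
follows from the intermediate value theorem on `[0, β]`, since `c ≤ 2 sinh² β ≤ F β`. For the
bound, the duplication formula `sinh x = 2 sinh (x/2) cosh (x/2)` gives
`F (β/4) ≤ 2 sinh² (β/2) ≤ sinh² β ≤ c`, and monotonicity turns this into `β/4 ≤ s`.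
-/

open Real Set

noncomputable def sinhSqSum (s : ℝ) : ℝ := sinh (2 * s) ^ 2 + sinh s ^ 2

lemma sinh_sq_strictMonoOn : StrictMonoOn (fun x => sinh x ^ 2) (Ici 0) :=
  fun _ ha _ _ hab => pow_lt_pow_left₀ (sinh_lt_sinh.mpr hab) (sinh_nonneg_iff.mpr ha) two_ne_zero

lemma four_mul_sinh_half_sq_le (x : ℝ) : 4 * sinh (x / 2) ^ 2 ≤ sinh x ^ 2 := by
  have hsinh : sinh x = 2 * sinh (x / 2) * cosh (x / 2) := by
    rw [← sinh_two_mul, mul_div_cancel₀ x two_ne_zero]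
  have hcosh : 1 ≤ cosh (x / 2) ^ 2 := one_le_pow₀ (one_le_cosh _)
  rw [hsinh]
  nlinarith [sq_nonneg (sinh (x / 2))]

lemma continuous_sinhSqSum : Continuous sinhSqSum := by
  unfold sinhSqSum
  fun_prop

lemma sinhSqSum_zero : sinhSqSum 0 = 0 := by
  simp [sinhSqSum]

lemma sinhSqSum_strictMonoOn : StrictMonoOn sinhSqSum (Ici 0) := by
  intro a ha b hb hab
  have ha2 : 2 * a ∈ Ici (0 : ℝ) := mul_nonneg zero_le_two (mem_Ici.mp ha)
  have hb2 : 2 * b ∈ Ici (0 : ℝ) := mul_nonneg zero_le_two (mem_Ici.mp hb)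
  exact add_lt_add (sinh_sq_strictMonoOn ha2 hb2 (by linarith)) (sinh_sq_strictMonoOn ha hb hab)

lemma five_mul_sinh_sq_le_sinhSqSum (x : ℝ) : 5 * sinh x ^ 2 ≤ sinhSqSum x := by
  have h := four_mul_sinh_half_sq_le (2 * x)
  rw [mul_div_cancel_left₀ x two_ne_zero] at h
  unfold sinhSqSum
  linarith

lemma sinhSqSum_div_four_le {x : ℝ} (hx : 0 ≤ x) : sinhSqSum (x / 4) ≤ sinh x ^ 2 := by
  have hquarter : sinh (x / 4) ^ 2 ≤ sinh (x / 2) ^ 2 :=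
    sinh_sq_strictMonoOn.monotoneOn (by simp only [mem_Ici]; positivity)
      (by simp only [mem_Ici]; positivity) (by linarith)
  have hhalf := four_mul_sinh_half_sq_le x
  rw [sinhSqSum, show 2 * (x / 4) = x / 2 by ring]
  nlinarith [sq_nonneg (sinh (x / 2))]

theorem unique_s_solution (β γ : ℝ) (hβγ : γ ≤ β) (hγ : 0 ≤ γ) :
    (∃! s : ℝ, 0 ≤ s ∧
        sinh (2 * s) ^ 2 + sinh s ^ 2 = sinh β ^ 2 + sinh γ ^ 2) ∧
    ∀ s : ℝ, 0 ≤ s →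
        sinh (2 * s) ^ 2 + sinh s ^ 2 = sinh β ^ 2 + sinh γ ^ 2 →
        β / 4 ≤ s := by
  change (∃! s, 0 ≤ s ∧ sinhSqSum s = _) ∧ ∀ s, 0 ≤ s → sinhSqSum s = _ → _
  have hβ : 0 ≤ β := hγ.trans hβγ
  have hγβ : sinh γ ^ 2 ≤ sinh β ^ 2 := sinh_sq_strictMonoOn.monotoneOn hγ hβ hβγ
  obtain ⟨s, hs, hFs⟩ : ∃ s ∈ Icc 0 β, sinhSqSum s = sinh β ^ 2 + sinh γ ^ 2 := by
    refine intermediate_value_Icc hβ continuous_sinhSqSum.continuousOn ⟨?_, ?_⟩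
    · rw [sinhSqSum_zero]
      positivity
    · linarith [five_mul_sinh_sq_le_sinhSqSum β, sq_nonneg (sinh β)]
  refine ⟨⟨s, ⟨hs.1, hFs⟩, fun t ⟨ht, hFt⟩ => ?_⟩, fun t ht hFt => ?_⟩
  · exact sinhSqSum_strictMonoOn.injOn ht hs.1 (hFt.trans hFs.symm)
  · have hquarter : sinhSqSum (β / 4) ≤ sinhSqSum t := by
      linarith [sinhSqSum_div_four_le hβ, sq_nonneg (sinh γ)]
    exact (sinhSqSum_strictMonoOn.le_iff_le (by simp only [mem_Ici]; positivity) ht).mp hquarter
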